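/- Let a ∈ L¹(ℝ^n_+, x₁^{α(c₁−1)}⋯x_n^{α(c_n−1)} dx) for some reals c₁,…,c_n < 1 and 0 < α ≤ 1. Then for p₀ > 0 and p in the interior of ℝ^n_+, |Π_α[a](p, p₀)| ≤ C p₀ · ‖a‖_{L¹(ℝ^n_+, x₁^{α(c₁−1)}⋯x_n^{α(c_n−1)})} for some constant C depending on p, and hence Π_α[a](p, p₀) → 0 as p₀ → 0+. -/

import Mathlib

open Real MeasureTheory Filter

/-- The CES product `p ⊙_α x = (∑ (p_k x_k)^α)^(1/α)`. -/
noncomputable def cesProd (n : ℕ) (α : ℝ) (p x : Fin n → ℝ) : ℝ :=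
  (∑ i, (p i * x i) ^ α) ^ (1/α)

/-- `Π_α[a](p,p₀)` for an absolutely continuous measure with density `a`. -/
noncomputable def profitD (n : ℕ) (α : ℝ) (a : (Fin n → ℝ) → ℝ)
    (p : Fin n → ℝ) (p₀ : ℝ) : ℝ :=
  ∫ x in {x : Fin n → ℝ | ∀ i, 0 < x i}, max 0 (p₀ - cesProd n α p x) * a x

/-!
The integrand of `Π_α[a](p, p₀)` vanishes unless `p ⊙_α x < p₀`, and there every
`p_k x_k ≤ p ⊙_α x < p₀`. For `p₀ ≤ 1` the factors `(p_k x_k)^{α(c_k-1)}` are then at least `1`,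
so the integrand is bounded by `p₀ |a(x)| ∏_k (p_k x_k)^{α(c_k-1)}`, which integrates to
`p₀ ∏_k p_k^{α(c_k-1)} ‖a‖`.
-/

theorem measurableSet_setOf_forall_pos {ι : Type*} [Countable ι] :
    MeasurableSet {x : ι → ℝ | ∀ i, 0 < x i} := by
  simp only [Set.ofPred_forall]
  exact MeasurableSet.iInter fun i => measurableSet_lt measurable_const (measurable_pi_apply i)

theorem one_le_prod_rpow {ι : Type*} (s : Finset ι) {y e : ι → ℝ}
    (hy0 : ∀ i, 0 < y i) (hy1 : ∀ i, y i ≤ 1) (he : ∀ i, e i ≤ 0) :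
    1 ≤ ∏ i ∈ s, y i ^ e i := by
  calc (1 : ℝ) = ∏ _i ∈ s, (1 : ℝ) := by simp
    _ ≤ ∏ i ∈ s, y i ^ e i := Finset.prod_le_prod (fun _ _ => zero_le_one) fun i _ =>
        one_le_rpow_of_pos_of_le_one_of_nonpos (hy0 i) (hy1 i) (he i)

section CES

variable {n : ℕ} {α : ℝ} {p x : Fin n → ℝ}

theorem cesProd_nonneg (hp : ∀ i, 0 ≤ p i) (hx : ∀ i, 0 ≤ x i) : 0 ≤ cesProd n α p x :=
  rpow_nonneg (Finset.sum_nonneg fun i _ => rpow_nonneg (mul_nonneg (hp i) (hx i)) _) _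

theorem mul_le_cesProd (hα : 0 < α) (hp : ∀ i, 0 ≤ p i) (hx : ∀ i, 0 ≤ x i) (i : Fin n) :
    p i * x i ≤ cesProd n α p x := by
  have hpx : ∀ j, 0 ≤ p j * x j := fun j => mul_nonneg (hp j) (hx j)
  calc p i * x i = ((p i * x i) ^ α) ^ (1 / α) := by
        rw [← rpow_mul (hpx i), mul_one_div_cancel hα.ne', rpow_one]
    _ ≤ cesProd n α p x :=
        rpow_le_rpow (rpow_nonneg (hpx i) _)
          (Finset.single_le_sum (fun j _ => rpow_nonneg (hpx j) _) (Finset.mem_univ i))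
          (one_div_nonneg.mpr hα.le)

theorem max_sub_cesProd_le {e : Fin n → ℝ} {p₀ : ℝ} (hα : 0 < α) (hp : ∀ i, 0 < p i)
    (hx : ∀ i, 0 < x i) (he : ∀ i, e i ≤ 0) (hp₀ : 0 ≤ p₀) (hp₀1 : p₀ ≤ 1) :
    max 0 (p₀ - cesProd n α p x) ≤ p₀ * ∏ i, (p i * x i) ^ e i := by
  have hprod : 0 ≤ ∏ i, (p i * x i) ^ e i :=
    Finset.prod_nonneg fun i _ => rpow_nonneg (mul_pos (hp i) (hx i)).le _
  rcases le_total p₀ (cesProd n α p x) with hle | hlt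
  · rw [max_eq_left (sub_nonpos.mpr hle)]
    positivity
  · have hone : 1 ≤ ∏ i, (p i * x i) ^ e i :=
      one_le_prod_rpow _ (fun i => mul_pos (hp i) (hx i))
        (fun i => ((mul_le_cesProd hα (fun j => (hp j).le) (fun j => (hx j).le) i).trans
          hlt).trans hp₀1) he
    calc max 0 (p₀ - cesProd n α p x) ≤ p₀ :=
          max_le hp₀ (sub_le_self _ (cesProd_nonneg (fun j => (hp j).le) (fun j => (hx j).le)))
      _ ≤ p₀ * ∏ i, (p i * x i) ^ e i := le_mul_of_one_le_right hp₀ hone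

theorem abs_profitD_le {e : Fin n → ℝ} {p₀ : ℝ} (hα : 0 < α) (he : ∀ i, e i ≤ 0)
    {a : (Fin n → ℝ) → ℝ}
    (ha : IntegrableOn (fun x => a x * ∏ i, x i ^ e i) {x : Fin n → ℝ | ∀ i, 0 < x i})
    (hp : ∀ i, 0 < p i) (hp₀ : 0 ≤ p₀) (hp₀1 : p₀ ≤ 1) :
    |profitD n α a p p₀| ≤
      (∏ i, p i ^ e i) * p₀ * ∫ x in {x : Fin n → ℝ | ∀ i, 0 < x i}, |a x| * ∏ i, x i ^ e i := by
  have hS := measurableSet_setOf_forall_pos (ι := Fin n)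
  have hw : ∀ x : Fin n → ℝ, (∀ i, 0 < x i) → 0 < ∏ i, x i ^ e i :=
    fun x hx => Finset.prod_pos fun i _ => rpow_pos_of_pos (hx i) _
  have hg : IntegrableOn (fun x => |a x| * ∏ i, x i ^ e i) {x | ∀ i, 0 < x i} :=
    IntegrableOn.congr_fun ha.abs (fun x hx => by simp only [abs_mul, abs_of_pos (hw x hx)]) hS
  rw [profitD, ← integral_const_mul, ← Real.norm_eq_abs]
  refine norm_integral_le_of_norm_le (hg.const_mul _) ?_
  filter_upwards [ae_restrict_mem hS] with x hx
  calc ‖max 0 (p₀ - cesProd n α p x) * a x‖ = max 0 (p₀ - cesProd n α p x) * |a x| := by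
        rw [norm_mul, Real.norm_of_nonneg (le_max_left _ _), Real.norm_eq_abs]
    _ ≤ p₀ * (∏ i, (p i * x i) ^ e i) * |a x| :=
        mul_le_mul_of_nonneg_right (max_sub_cesProd_le hα hp hx he hp₀ hp₀1) (abs_nonneg _)
    _ = (∏ i, p i ^ e i) * p₀ * (|a x| * ∏ i, x i ^ e i) := by
        simp only [mul_rpow (hp _).le (hx _).le, Finset.prod_mul_distrib]
        ring

end CES

theorem stmt15_general (n : ℕ) (α : ℝ) (hα0 : 0 < α)
    (c : Fin n → ℝ) (hc : ∀ i, c i < 1)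
    (a : (Fin n → ℝ) → ℝ)
    (ha : IntegrableOn (fun x => a x * ∏ i, x i ^ (α * (c i - 1)))
      {x : Fin n → ℝ | ∀ i, 0 < x i})
    (p : Fin n → ℝ) (hp : ∀ i, 0 < p i) :
    (∃ C > (0:ℝ), ∃ δ > (0:ℝ), ∀ p₀ : ℝ, 0 < p₀ → p₀ < δ →
      |profitD n α a p p₀| ≤
        C * p₀ * ∫ x in {x : Fin n → ℝ | ∀ i, 0 < x i},
          |a x| * ∏ i, x i ^ (α * (c i - 1))) ∧
    Tendsto (fun p₀ => profitD n α a p p₀) (nhdsWithin 0 (Set.Ioi 0)) (nhds 0) := by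
  have he : ∀ i, α * (c i - 1) ≤ 0 := fun i =>
    mul_nonpos_of_nonneg_of_nonpos hα0.le (sub_nonpos.mpr (hc i).le)
  set C := ∏ i, p i ^ (α * (c i - 1))
  set N := ∫ x in {x : Fin n → ℝ | ∀ i, 0 < x i}, |a x| * ∏ i, x i ^ (α * (c i - 1))
  have hbound : ∀ p₀ : ℝ, 0 < p₀ → p₀ < 1 → |profitD n α a p p₀| ≤ C * p₀ * N :=
    fun p₀ h0 h1 => abs_profitD_le hα0 he ha hp h0.le h1.le
  refine ⟨⟨C, Finset.prod_pos fun i _ => rpow_pos_of_pos (hp i) _, 1, one_pos, hbound⟩, ?_⟩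
  have hlim : Tendsto (fun p₀ : ℝ => C * p₀ * N) (nhdsWithin 0 (Set.Ioi 0)) (nhds 0) := by
    simpa using (((tendsto_id (x := nhds (0 : ℝ))).const_mul C).mul_const N).mono_left
      nhdsWithin_le_nhds
  rw [tendsto_zero_iff_abs_tendsto_zero]
  refine squeeze_zero' (Eventually.of_forall fun _ => abs_nonneg _) ?_ hlim
  filter_upwards [self_mem_nhdsWithin, mem_nhdsWithin_of_mem_nhds (Iio_mem_nhds one_pos)]
    with p₀ h0 h1 using hbound p₀ h0 h1

theorem stmt15 (n : ℕ) (α : ℝ) (hα0 : 0 < α) (hα1 : α ≤ 1)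
    (c : Fin n → ℝ) (hc : ∀ i, c i < 1)
    (a : (Fin n → ℝ) → ℝ)
    (ha : IntegrableOn (fun x => a x * ∏ i, x i ^ (α * (c i - 1)))
      {x : Fin n → ℝ | ∀ i, 0 < x i})
    (p : Fin n → ℝ) (hp : ∀ i, 0 < p i) :
    (∃ C > (0:ℝ), ∃ δ > (0:ℝ), ∀ p₀ : ℝ, 0 < p₀ → p₀ < δ →
      |profitD n α a p p₀| ≤
        C * p₀ * ∫ x in {x : Fin n → ℝ | ∀ i, 0 < x i},
          |a x| * ∏ i, x i ^ (α * (c i - 1))) ∧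
    Tendsto (fun p₀ => profitD n α a p p₀) (nhdsWithin 0 (Set.Ioi 0)) (nhds 0) :=
  stmt15_general n α hα0 c hc a ha p hp
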